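/- In an egr(v,3,8,2t)-graph, every path subgraph on 6 vertices is contained in at most 1 cycle of length 8, every path subgraph on 5 vertices in at most 2 such cycles, and every path subgraph on 4 vertices in at most 4 such cycles. -/

import Mathlib

/-!
A path `u` on a shortest cycle `C` of length `n` is completed to `C` by a path of length
`n - |u|` from the end of `u` back to its start. If `2 |u| > n`, two such completions have total
length less than the girth, so they coincide and `u` lies on at most one shortest cycle. A shorter
path `u` lies on `C` together with its extension by the next vertex of `C`, which is one of the at
most `k - 1` neighbours of the end of `u` off `u`. By induction on `m`, a path with `ℓ` edges and
`n < 2 (ℓ + m)` lies on at most `(k - 1) ^ m` shortest cycles. For `n = 8` and `k = 3`, paths with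
`5, 4, 3` edges give `1, 2, 4`.
-/

open SimpleGraph

/-- `c` is a cycle subgraph of `G` of length `g`. -/
def IsCycleSub {V : Type*} (G : SimpleGraph V) (g : ℕ) (c : G.Subgraph) : Prop :=
  ∃ (a : V) (w : G.Walk a a), w.IsCycle ∧ w.length = g ∧ c = w.toSubgraph

/-- `p` is a path subgraph of `G` on `n` vertices. -/
def IsPathSub {V : Type*} (G : SimpleGraph V) (n : ℕ) (p : G.Subgraph) : Prop :=
  ∃ (a b : V) (w : G.Walk a b), w.IsPath ∧ w.length + 1 = n ∧ p = w.toSubgraph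

/-- `G` is an edge-girth-regular `(v,k,g,λ)`-graph. -/
def IsEGR {V : Type*} (G : SimpleGraph V) (v k g lam : ℕ) : Prop :=
  Nat.card V = v ∧ (∀ x : V, (G.neighborSet x).ncard = k) ∧ G.girth = g ∧
  ∀ e ∈ G.edgeSet,
    {c : G.Subgraph | IsCycleSub G g c ∧ e ∈ c.edgeSet}.ncard = lam

namespace SimpleGraph

variable {V : Type*} {G : SimpleGraph V}

def cyclesThrough (G : SimpleGraph V) (n : ℕ) (p : G.Subgraph) : Set G.Subgraph :=
  {c | IsCycleSub G n c ∧ p ≤ c}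

namespace Walk

variable {s t b : V}

theorem IsPath.eq_of_length_add_length_lt_egirth {p q : G.Walk s t} (hp : p.IsPath)
    (hq : q.IsPath) (h : ((p.length + q.length : ℕ) : ℕ∞) < G.egirth) : p = q := by
  by_contra hne
  obtain ⟨_, -, -, c, hc, hlen⟩ := hp.exists_isCycle_length_le_add_of_ne hq hne
  exact (h.trans_le ((egirth_le_length hc).trans (by exact_mod_cast hlen))).false

theorem IsPath.exists_append_eq_of_edges_subset {u : G.Walk s t} {P : G.Walk s b}
    (hu : u.IsPath) (hP : P.IsPath) (h : u.edges ⊆ P.edges) :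
    ∃ r : G.Walk t b, P = u.append r := by
  induction u with
  | nil => exact ⟨P, rfl⟩
  | @cons s x t hadj u' ih =>
    have hmem : s(s, x) ∈ P.edges := h (by simp)
    obtain rfl : x = P.snd := hP.eq_snd_of_mem_edges hmem
    have hnil : ¬P.Nil := fun hn => by simp [edges_eq_nil.mpr hn] at hmem
    rw [cons_isPath_iff] at hu
    have hsub : u'.edges ⊆ P.tail.edges := by
      intro e he
      have he' := h (List.mem_cons_of_mem _ he)
      rw [← cons_tail_eq P hnil, edges_cons, List.mem_cons] at he'
      refine he'.resolve_left ?_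
      rintro rfl
      exact hu.2 (u'.fst_mem_support_of_mem_edges he)
    obtain ⟨r, hr⟩ := ih hu.1 hP.tail hsub
    exact ⟨r, by rw [cons_append, ← hr, cons_tail_eq _ hnil]⟩

theorem IsCycle.exists_append_eq_of_penultimate_ne {u : G.Walk s t} {w : G.Walk s s}
    (hu : u.IsPath) (hw : w.IsCycle) (h : u.edges ⊆ w.edges) (hpen : w.penultimate ≠ u.snd) :
    ∃ r : G.Walk t s, w = u.append r := by
  have hadj := w.adj_penultimate hw.not_nil
  have hsub : u.edges ⊆ w.dropLast.edges := by
    intro e he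
    have he' := h he
    rw [← concat_dropLast hadj, edges_concat, List.concat_eq_append, List.mem_append,
      List.mem_singleton] at he'
    refine he'.resolve_right ?_
    rintro rfl
    exact hpen (hu.eq_snd_of_mem_edges (Sym2.eq_swap ▸ he))
  obtain ⟨r, hr⟩ := hu.exists_append_eq_of_edges_subset hw.isPath_dropLast hsub
  exact ⟨r.concat hadj, by rw [append_concat, ← hr, concat_dropLast]⟩

theorem IsPath.exists_isCycle_append_of_toSubgraph_le {u : G.Walk s t} {a : V}
    {w : G.Walk a a} (hu : u.IsPath) (hw : w.IsCycle)
    (hle : u.toSubgraph ≤ w.toSubgraph) :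
    ∃ r : G.Walk t s, (u.append r).IsCycle ∧ (u.append r).toSubgraph = w.toSubgraph ∧
      (u.append r).length = w.length := by
  classical
  have hs : s ∈ w.support := by simpa using hle.1 u.start_mem_verts_toSubgraph
  set c := w.rotate s hs
  have hc : c.IsCycle := hw.rotate hs
  have hsub : u.edges ⊆ c.edges := fun e he => by
    rw [← mem_edges_toSubgraph, toSubgraph_rotate]
    exact Subgraph.edgeSet_mono hle (u.mem_edges_toSubgraph.mpr he)
  suffices ∃ r, c = u.append r ∨ c.reverse = u.append r by
    obtain ⟨r, hr | hr⟩ := this <;> refine ⟨r, ?_, ?_, ?_⟩ <;>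
      simp [← hr, hc, c, toSubgraph_rotate]
  -- `u` leaves `s` along the first or the last edge of `c`; in the latter case reverse `c`.
  by_cases hpen : c.penultimate = u.snd
  · have hpen' : c.reverse.penultimate ≠ u.snd := by
      rw [penultimate_reverse, ← hpen]
      exact hc.snd_ne_penultimate
    obtain ⟨r, hr⟩ := hc.reverse.exists_append_eq_of_penultimate_ne hu
      (fun e he => by simpa using hsub he) hpen'
    exact ⟨r, .inr hr⟩
  · obtain ⟨r, hr⟩ := hc.exists_append_eq_of_penultimate_ne hu hsub hpen
    exact ⟨r, .inl hr⟩

end Walk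

variable {n : ℕ} {s t : V}

theorem exists_append_of_mem_cyclesThrough {u : G.Walk s t} {c : G.Subgraph}
    (hu : u.IsPath) (hc : c ∈ G.cyclesThrough n u.toSubgraph) :
    ∃ r : G.Walk t s, (u.append r).IsCycle ∧ u.length + r.length = n ∧
      c = (u.append r).toSubgraph := by
  obtain ⟨⟨a, w, hw, rfl, rfl⟩, hle⟩ := hc
  obtain ⟨r, hr, hsub, hlen⟩ := hu.exists_isCycle_append_of_toSubgraph_le hw hle
  exact ⟨r, hr, by rw [← hlen, Walk.length_append], hsub.symm⟩

theorem subsingleton_cyclesThrough {u : G.Walk s t} (hg : (n : ℕ∞) ≤ G.egirth)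
    (hu : u.IsPath) (hlen : n < 2 * u.length) :
    (G.cyclesThrough n u.toSubgraph).Subsingleton := by
  have hnil : ¬u.Nil := Walk.not_nil_iff_lt_length.mpr (by omega)
  rintro c₁ hc₁ c₂ hc₂
  obtain ⟨r₁, hr₁, hl₁, rfl⟩ := exists_append_of_mem_cyclesThrough hu hc₁
  obtain ⟨r₂, hr₂, hl₂, rfl⟩ := exists_append_of_mem_cyclesThrough hu hc₂
  have hshort : ((r₁.length + r₂.length : ℕ) : ℕ∞) < G.egirth :=
    lt_of_lt_of_le (by exact_mod_cast (by omega : r₁.length + r₂.length < n)) hg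
  rw [(hr₁.isPath_of_append_right hnil).eq_of_length_add_length_lt_egirth
    (hr₂.isPath_of_append_right hnil) hshort]

theorem exists_concat_mem_cyclesThrough {u : G.Walk s t} {c : G.Subgraph} (hu : u.IsPath)
    (hlen : u.length + 2 ≤ n) (hc : c ∈ G.cyclesThrough n u.toSubgraph) :
    ∃ x, ∃ h : G.Adj t x, x ∉ u.support ∧
      c ∈ G.cyclesThrough n (u.concat h).toSubgraph := by
  obtain ⟨r, hr, hrlen, rfl⟩ := exists_append_of_mem_cyclesThrough hu hc
  have hrnil : ¬r.Nil := Walk.not_nil_iff_lt_length.mpr (by omega)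
  have htail : ¬r.tail.Nil := Walk.not_nil_iff_lt_length.mpr (by
    have := r.length_tail_add_one hrnil
    omega)
  have hsplit : (u.concat (r.adj_snd hrnil)).append r.tail = u.append r := by
    rw [Walk.concat_append, Walk.cons_tail_eq _ hrnil]
  have hpath : (u.concat (r.adj_snd hrnil)).IsPath :=
    (hsplit ▸ hr).isPath_of_append_left htail
  refine ⟨r.snd, r.adj_snd hrnil, ((Walk.concat_isPath_iff _).mp hpath).2, hc.1, ?_⟩
  rw [← hsplit, Walk.toSubgraph_append]
  exact le_sup_left

theorem encard_setOf_adj_notMem_support_le {u : G.Walk s t} (hnil : ¬u.Nil) :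
    {x | G.Adj t x ∧ x ∉ u.support}.encard ≤ (G.neighborSet t).encard - 1 := by
  have hpen : u.penultimate ∈ G.neighborSet t := (u.adj_penultimate hnil).symm
  rw [← Set.encard_sdiff_singleton_of_mem hpen]
  refine Set.encard_le_encard fun x ⟨hx, hxu⟩ => ⟨hx, ?_⟩
  rintro rfl
  exact hxu (u.getVert_mem_support _)

theorem encard_cyclesThrough_le {k : ℕ} (hg : (n : ℕ∞) ≤ G.egirth)
    (hdeg : ∀ v, (G.neighborSet v).encard ≤ k) (m : ℕ) (u : G.Walk s t)
    (hu : u.IsPath) (hpos : 0 < u.length) (hlong : n < 2 * (u.length + m))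
    (hshort : u.length + m < n) :
    (G.cyclesThrough n u.toSubgraph).encard ≤ ((k - 1) ^ m : ℕ) := by
  induction m generalizing s t with
  | zero =>
    simpa using (Set.encard_le_one_iff_subsingleton.mpr
      (subsingleton_cyclesThrough hg hu (by omega)))
  | succ m ih =>
    have hnil : ¬u.Nil := Walk.not_nil_iff_lt_length.mpr hpos
    set A := {x | G.Adj t x ∧ x ∉ u.support}
    have hA : A.encard ≤ ((k - 1 : ℕ) : ℕ∞) := by
      push_cast
      exact (encard_setOf_adj_notMem_support_le hnil).trans (tsub_le_tsub_right (hdeg t) 1)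
    have : Fintype A := (Set.finite_of_encard_le_coe hA).fintype
    have hcover : G.cyclesThrough n u.toSubgraph ⊆
        ⋃ x : A, G.cyclesThrough n (u.concat x.2.1).toSubgraph := by
      intro c hc
      obtain ⟨x, hx, hxu, hc'⟩ := exists_concat_mem_cyclesThrough hu (by omega) hc
      exact Set.mem_iUnion.mpr ⟨⟨x, hx, hxu⟩, hc'⟩
    calc (G.cyclesThrough n u.toSubgraph).encard
        ≤ ∑ x : A, (G.cyclesThrough n (u.concat x.2.1).toSubgraph).encard :=
          (Set.encard_le_encard hcover).trans (Set.encard_iUnion_le_of_fintype _)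
      _ ≤ ∑ _x : A, (((k - 1) ^ m : ℕ) : ℕ∞) := Finset.sum_le_sum fun x _ =>
          ih _ (hu.concat x.2.2 x.2.1) (by simp) (by simp; omega) (by simp; omega)
      _ = A.encard * ((k - 1) ^ m : ℕ) := by
          rw [Finset.sum_const, Finset.card_univ, nsmul_eq_mul, Set.encard_eq_coe_toFinset_card,
            Set.toFinset_card]
      _ ≤ ((k - 1 : ℕ) : ℕ∞) * ((k - 1) ^ m : ℕ) := by gcongr
      _ = ((k - 1) ^ (m + 1) : ℕ) := by push_cast; ring

theorem ncard_cyclesThrough_le_of_isPathSub {k ℓ : ℕ} (hg : (n : ℕ∞) ≤ G.egirth)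
    (hdeg : ∀ v, (G.neighborSet v).encard ≤ k) (m : ℕ) {p : G.Subgraph}
    (hp : IsPathSub G (ℓ + 1) p) (hpos : 0 < ℓ) (hlong : n < 2 * (ℓ + m))
    (hshort : ℓ + m < n) :
    (G.cyclesThrough n p).ncard ≤ (k - 1) ^ m := by
  obtain ⟨s, t, u, hu, hlen, rfl⟩ := hp
  have hlen' : u.length = ℓ := by omega
  subst hlen'
  exact (Set.encard_le_coe_iff_finite_ncard_le.mp
    (encard_cyclesThrough_le hg hdeg m u hu hpos hlong hshort)).2

end SimpleGraph

/-- In an egr(v,3,8,2t)-graph: any P₆ lies on at most 1 shortest cycle, any P₅ on at most 2,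
and any P₄ on at most 4. -/
theorem stmt_11 {V : Type*} (G : SimpleGraph V) (v t : ℕ)
    (hG : IsEGR G v 3 8 (2 * t)) :
    (∀ p : G.Subgraph, IsPathSub G 6 p →
      {c : G.Subgraph | IsCycleSub G 8 c ∧ p ≤ c}.ncard ≤ 1) ∧
    (∀ p : G.Subgraph, IsPathSub G 5 p →
      {c : G.Subgraph | IsCycleSub G 8 c ∧ p ≤ c}.ncard ≤ 2) ∧
    (∀ p : G.Subgraph, IsPathSub G 4 p →
      {c : G.Subgraph | IsCycleSub G 8 c ∧ p ≤ c}.ncard ≤ 4) := by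
  obtain ⟨-, hdeg, hgirth, -⟩ := hG
  have hg : ((8 : ℕ) : ℕ∞) ≤ G.egirth := by
    rw [girth, ENat.toNat_eq_iff (by norm_num)] at hgirth
    rw [hgirth]
  have hdeg' : ∀ x, (G.neighborSet x).encard ≤ 3 := fun x => by
    have hfin : (G.neighborSet x).Finite := Set.finite_of_ncard_ne_zero (by rw [hdeg x]; norm_num)
    rw [← hfin.cast_ncard_eq, hdeg x]
    rfl
  exact ⟨fun p hp => ncard_cyclesThrough_le_of_isPathSub (ℓ := 5) hg hdeg' 0 hp
      (by norm_num) (by norm_num) (by norm_num),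
    fun p hp => ncard_cyclesThrough_le_of_isPathSub (ℓ := 4) hg hdeg' 1 hp
      (by norm_num) (by norm_num) (by norm_num),
    fun p hp => ncard_cyclesThrough_le_of_isPathSub (ℓ := 3) hg hdeg' 2 hp
      (by norm_num) (by norm_num) (by norm_num)⟩
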